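/- arXiv:1403.0233 — 4 statements merged into one kernel-verified Lean document; each statement's English description precedes it below -/
import Mathlib

section
/- For all n ≥ 1 and i, j ≥ 0, the coefficients t_{n,i,j} satisfy t_{2n+1,i,j} = t_{2n,i,j} + (2i+2)t_{2n,i+1,j-1} + (j+1)t_{2n,i,j+1} + (2n-2i-j+1)t_{2n,i,j-1} and t_{2n,i,j} = t_{2n-1,i-1,j} + (2i+1)t_{2n-1,i,j-1} + (j+1)t_{2n-1,i-1,j+1} + (2n-2i-j+1)t_{2n-1,i-1,j-1}. -/
open MvPolynomial Finset

/-- The derivation for the grammar `G = {w → wx, x → yz, y → xz, z → xy}` on `ℚ[w,x,y,z]`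
(`w = X 0`, `x = X 1`, `y = X 2`, `z = X 3`). -/
noncomputable def Dg : Derivation ℚ (MvPolynomial (Fin 4) ℚ) (MvPolynomial (Fin 4) ℚ) :=
  MvPolynomial.mkDerivation ℚ ![X 0 * X 1, X 2 * X 3, X 1 * X 3, X 1 * X 2]

/-- `tC n i j` is the coefficient `t_{n,i,j}` of `D^n(w)`:
for even `n`, the coefficient of `w x^(2i) y^j z^(n-2i-j)`;
for odd `n`, the coefficient of `w x^(2i+1) y^j z^(n-1-2i-j)`.
Coefficients with negative indices are `0`. -/
noncomputable def tC (n : ℕ) (i j : ℤ) : ℚ :=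
  if 0 ≤ i ∧ 0 ≤ j then
    MvPolynomial.coeff
      (Finsupp.single 0 1
        + Finsupp.single 1 ((if Even n then 2*i else 2*i+1).toNat)
        + Finsupp.single 2 j.toNat
        + Finsupp.single 3 (((n:ℤ) - 2*i - j - if Even n then 0 else 1).toNat))
      ((fun p => Dg p)^[n] (X 0))
  else 0

/-
Write `D = w x ∂_w + y z ∂_x + x z ∂_y + x y ∂_z`. The coefficient of `w x^b y^c z^d` in `D p`
is a combination of four coefficients of `p`, all again with `w`-exponent `1`. Indexing
coefficients by integer exponents, with value `0` off `ℕ⁴`, this recurrence holds with no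
boundary cases, and both identities are this recurrence read at the exponents of `t_{n,i,j}`.
The only extra input is homogeneity: `D^n(w)` has degree `n` in `x, y, z`, so the truncation of
a negative `z`-exponent to `0` in `tC` only ever hits a vanishing coefficient.
-/

namespace MvPolynomial

variable {σ R : Type*} [Fintype σ] [CommRing R]

open Classical in
noncomputable def coeffInt (e : σ → ℤ) (p : MvPolynomial σ R) : R :=
  if 0 ≤ e then coeff (Finsupp.equivFunOnFinite.symm fun i => (e i).toNat) p else 0

theorem coeffInt_of_neg (e : σ → ℤ) (i : σ) (hi : e i < 0) (p : MvPolynomial σ R) :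
    coeffInt e p = 0 :=
  if_neg fun he => (he i).not_gt hi

theorem coeffInt_add (e : σ → ℤ) (p q : MvPolynomial σ R) :
    coeffInt e (p + q) = coeffInt e p + coeffInt e q := by
  unfold coeffInt
  split_ifs <;> simp

variable [DecidableEq σ]

theorem coeffInt_X_mul (e : σ → ℤ) (s : σ) (p : MvPolynomial σ R) :
    coeffInt e (X s * p) = coeffInt (e - Pi.single s 1) p := by
  unfold coeffInt
  by_cases he : 0 ≤ e
  · by_cases hs : 1 ≤ e s
    · have he' : 0 ≤ e - Pi.single s 1 := fun i => by
        rcases eq_or_ne i s with rfl | hi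
        · simpa using hs
        · simpa [hi] using he i
      rw [if_pos he, if_pos he', ← coeff_X_mul _ s p]
      congr 1
      ext i
      rcases eq_or_ne i s with rfl | hi
      · simp
        omega
      · simp [hi]
    · have he' : ¬ 0 ≤ e - Pi.single s 1 := fun h => by
        have := h s
        simp only [Pi.zero_apply, Pi.sub_apply, Pi.single_eq_same, Int.sub_nonneg] at this
        omega
      rw [if_pos he, if_neg he', coeff_X_mul', if_neg]
      simp; omega
  · have he' : ¬ 0 ≤ e - Pi.single s 1 := fun h =>
      he (h.trans (sub_le_self _ (Pi.single_nonneg.2 zero_le_one)))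
    rw [if_neg he, if_neg he']

theorem coeffInt_pderiv (e : σ → ℤ) (s : σ) (p : MvPolynomial σ R) :
    coeffInt e (pderiv s p) = (e s + 1 : ℤ) * coeffInt (e + Pi.single s 1) p := by
  unfold coeffInt
  by_cases he : 0 ≤ e
  · have he' : 0 ≤ e + Pi.single s 1 := add_nonneg he (Pi.single_nonneg.2 zero_le_one)
    rw [if_pos he, if_pos he', coeff_pderiv, mul_comm]
    congr 1
    · simp only [Finsupp.equivFunOnFinite_symm_apply_apply, Int.cast_add, Int.cast_one]
      rw [← Int.cast_natCast, Int.toNat_of_nonneg (he s)]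
    · congr 1
      ext i
      rcases eq_or_ne i s with rfl | hi
      · have : 0 ≤ e i := he i
        simp
        omega
      · simp [hi]
  · obtain ⟨i, hi⟩ : ∃ i, e i < 0 := by simpa [Pi.le_def] using he
    rw [if_neg he]
    by_cases hs : e s = -1
    · simp [hs]
    · have he' : ¬ 0 ≤ e + Pi.single s 1 := fun h => by
        have := h i
        rcases eq_or_ne i s with rfl | hne
        · simp at this
          omega
        · simp [hne] at this
          omega
      rw [if_neg he', mul_zero]

end MvPolynomial

theorem Dg_apply (p : MvPolynomial (Fin 4) ℚ) :
    Dg p = X 0 * (X 1 * pderiv 0 p) + X 2 * (X 3 * pderiv 1 p)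
      + X 1 * (X 3 * pderiv 2 p) + X 1 * (X 2 * pderiv 3 p) := by
  have hDg : Dg = (X 0 * X 1 : MvPolynomial (Fin 4) ℚ) • pderiv 0
      + (X 2 * X 3 : MvPolynomial (Fin 4) ℚ) • pderiv 1
      + (X 1 * X 3 : MvPolynomial (Fin 4) ℚ) • pderiv 2
      + (X 1 * X 2 : MvPolynomial (Fin 4) ℚ) • pderiv 3 := by
    refine derivation_ext fun i => ?_
    fin_cases i <;> simp [Dg, pderiv_X]
  rw [hDg]
  simp only [Derivation.add_apply, Derivation.smul_apply, smul_eq_mul]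
  ring

theorem coeffInt_Dg (p : MvPolynomial (Fin 4) ℚ) (b c d : ℤ) :
    coeffInt ![1, b, c, d] (Dg p) =
      coeffInt ![1, b - 1, c, d] p + (b + 1) * coeffInt ![1, b + 1, c - 1, d - 1] p
        + (c + 1) * coeffInt ![1, b - 1, c + 1, d - 1] p
        + (d + 1) * coeffInt ![1, b - 1, c - 1, d + 1] p := by
  simp only [Dg_apply, coeffInt_add, coeffInt_X_mul, coeffInt_pderiv]
  have h₀ : ![1, b, c, d] - Pi.single 0 1 - Pi.single 1 1 + Pi.single 0 1
      = ![1, b - 1, c, d] := by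
    ext i; fin_cases i <;> simp only [Pi.add_apply, Pi.sub_apply, Pi.single_apply] <;> simp
  have h₁ : ![1, b, c, d] - Pi.single 2 1 - Pi.single 3 1 + Pi.single 1 1
      = ![1, b + 1, c - 1, d - 1] := by
    ext i; fin_cases i <;> simp only [Pi.add_apply, Pi.sub_apply, Pi.single_apply] <;> simp
  have h₂ : ![1, b, c, d] - Pi.single 1 1 - Pi.single 3 1 + Pi.single 2 1
      = ![1, b - 1, c + 1, d - 1] := by
    ext i; fin_cases i <;> simp only [Pi.add_apply, Pi.sub_apply, Pi.single_apply] <;> simp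
  have h₃ : ![1, b, c, d] - Pi.single 1 1 - Pi.single 2 1 + Pi.single 3 1
      = ![1, b - 1, c - 1, d + 1] := by
    ext i; fin_cases i <;> simp only [Pi.add_apply, Pi.sub_apply, Pi.single_apply] <;> simp
  rw [h₀, h₁, h₂, h₃]
  simp only [Pi.sub_apply, Pi.single_apply]
  simp

noncomputable def coeffIterate (n : ℕ) (b c d : ℤ) : ℚ :=
  coeffInt ![1, b, c, d] ((fun p => Dg p)^[n] (X 0))

theorem coeffIterate_succ (n : ℕ) (b c d : ℤ) :
    coeffIterate (n + 1) b c d =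
      coeffIterate n (b - 1) c d + (b + 1) * coeffIterate n (b + 1) (c - 1) (d - 1)
        + (c + 1) * coeffIterate n (b - 1) (c + 1) (d - 1)
        + (d + 1) * coeffIterate n (b - 1) (c - 1) (d + 1) := by
  rw [coeffIterate, Function.iterate_succ_apply']
  exact coeffInt_Dg _ b c d

theorem coeffIterate_of_nonneg (n : ℕ) {b c d : ℤ} (hb : 0 ≤ b) (hc : 0 ≤ c) (hd : 0 ≤ d) :
    coeffIterate n b c d =
      coeff (Finsupp.single 0 1 + Finsupp.single 1 b.toNat + Finsupp.single 2 c.toNat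
        + Finsupp.single 3 d.toNat) ((fun p => Dg p)^[n] (X 0)) := by
  have he : 0 ≤ ![1, b, c, d] := fun i => by fin_cases i <;> simp [*]
  rw [coeffIterate, coeffInt, if_pos he]
  congr 1
  ext i
  fin_cases i <;> simp

theorem coeffIterate_eq_zero_of_add_ne {n : ℕ} {b c d : ℤ} (h : b + c + d ≠ n) :
    coeffIterate n b c d = 0 := by
  induction n generalizing b c d with
  | zero =>
    by_cases hbcd : 0 ≤ b ∧ 0 ≤ c ∧ 0 ≤ d
    · obtain ⟨hb, hc, hd⟩ := hbcd
      rw [coeffIterate_of_nonneg 0 hb hc hd, Function.iterate_zero_apply, coeff_X, if_neg]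
      intro hm
      have h₁ := DFunLike.congr_fun hm 1
      have h₂ := DFunLike.congr_fun hm 2
      have h₃ := DFunLike.congr_fun hm 3
      simp at h₁ h₂ h₃
      omega
    · rw [coeffIterate, coeffInt, if_neg]
      intro he
      have h₁ := he 1
      have h₂ := he 2
      have h₃ := he 3
      simp at h₁ h₂ h₃
      omega
  | succ n ih =>
    have h' : b + c + d - 1 ≠ n := by push_cast at h; omega
    rw [coeffIterate_succ, ih, ih, ih, ih] <;> first | omega | simp

theorem coeff_Dg_iterate_eq_coeffIterate (n : ℕ) {b c : ℤ} (hb : 0 ≤ b) (hc : 0 ≤ c) :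
    coeff (Finsupp.single 0 1 + Finsupp.single 1 b.toNat + Finsupp.single 2 c.toNat
        + Finsupp.single 3 (n - b - c).toNat) ((fun p => Dg p)^[n] (X 0)) =
      coeffIterate n b c (n - b - c) := by
  by_cases hd : 0 ≤ (n : ℤ) - b - c
  · exact (coeffIterate_of_nonneg n hb hc hd).symm
  · have hzero := coeffIterate_of_nonneg n hb hc le_rfl
    rw [Int.toNat_zero] at hzero
    rw [Int.toNat_of_nonpos (z := n - b - c) (by omega), ← hzero,
      coeffIterate_eq_zero_of_add_ne (by omega), coeffIterate, coeffInt_of_neg _ 3 (by simpa using hd)]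

theorem tC_eq_coeffIterate (n : ℕ) (i j : ℤ) :
    tC n i j = coeffIterate n (if Even n then 2 * i else 2 * i + 1) j
      (n - (if Even n then 2 * i else 2 * i + 1) - j) := by
  have hz : ((n : ℤ) - 2 * i - j - if Even n then 0 else 1)
      = n - (if Even n then 2 * i else 2 * i + 1) - j := by
    split_ifs <;> ring
  rw [tC, hz]
  by_cases hij : 0 ≤ i ∧ 0 ≤ j
  · rw [if_pos hij]
    exact coeff_Dg_iterate_eq_coeffIterate n (by split_ifs <;> omega) hij.2
  · rw [if_neg hij, coeffIterate]
    rcases not_and_or.1 hij with hi | hj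
    · rw [coeffInt_of_neg _ 1 (by simp; split_ifs <;> omega)]
    · rw [coeffInt_of_neg _ 2 (by simpa using hj)]

theorem stmt9_general (n : ℕ) (hn : 1 ≤ n) (i j : ℤ) :
    tC (2*n+1) i j =
      tC (2*n) i j + (2*(i:ℚ)+2) * tC (2*n) (i+1) (j-1) + ((j:ℚ)+1) * tC (2*n) i (j+1)
        + (2*(n:ℚ)-2*(i:ℚ)-(j:ℚ)+1) * tC (2*n) i (j-1) ∧
    tC (2*n) i j =
      tC (2*n-1) (i-1) j + (2*(i:ℚ)+1) * tC (2*n-1) i (j-1)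
        + ((j:ℚ)+1) * tC (2*n-1) (i-1) (j+1)
        + (2*(n:ℚ)-2*(i:ℚ)-(j:ℚ)+1) * tC (2*n-1) (i-1) (j-1) := by
  obtain ⟨m, rfl⟩ : ∃ m, n = m + 1 := ⟨n - 1, by omega⟩
  have hodd : ¬ Even (2 * (m + 1) + 1) := by simp [parity_simps]
  have heven : Even (2 * (m + 1)) := even_two_mul _
  have hpred : 2 * (m + 1) - 1 = 2 * m + 1 := by omega
  have hodd' : ¬ Even (2 * m + 1) := by simp [parity_simps]
  simp only [tC_eq_coeffIterate, hodd, heven, hodd', hpred, if_true, if_false]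
  push_cast
  constructor
  · rw [coeffIterate_succ]
    push_cast
    ring_nf
  · rw [show 2 * (m + 1) = 2 * m + 1 + 1 by ring, coeffIterate_succ]
    push_cast
    ring_nf

theorem stmt9 (n : ℕ) (hn : 1 ≤ n) (i j : ℤ) (hi : 0 ≤ i) (hj : 0 ≤ j) :
    tC (2*n+1) i j =
      tC (2*n) i j + (2*(i:ℚ)+2) * tC (2*n) (i+1) (j-1) + ((j:ℚ)+1) * tC (2*n) i (j+1)
        + (2*(n:ℚ)-2*(i:ℚ)-(j:ℚ)+1) * tC (2*n) i (j-1) ∧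
    tC (2*n) i j =
      tC (2*n-1) (i-1) j + (2*(i:ℚ)+1) * tC (2*n-1) i (j-1)
        + ((j:ℚ)+1) * tC (2*n-1) (i-1) (j+1)
        + (2*(n:ℚ)-2*(i:ℚ)-(j:ℚ)+1) * tC (2*n-1) (i-1) (j-1) :=
  stmt9_general n hn i j
end

section
/- For all n ≥ 1, Σ_{i,j≥0} t_{n,i,j} = n!. -/
open MvPolynomial Finset

lemma Dg_monomial (s : Fin 4 →₀ ℕ) (r : ℚ) :
    Dg (monomial s r) = r • s.sum fun i k =>
      monomial (s - Finsupp.single i 1) (k : ℚ) •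
        (![X 0 * X 1, X 2 * X 3, X 1 * X 3, X 1 * X 2] i) := by
  unfold Dg
  exact MvPolynomial.mkDerivation_monomial (R := ℚ) (f := ![X 0 * X 1, X 2 * X 3, X 1 * X 3, X 1 * X 2]) s r

lemma step_aux (m m' : Fin 4 →₀ ℕ) (i a b : Fin 4) (c : ℚ)
    (h2 : coeff m (monomial (m' - Finsupp.single i 1) c •
      (X a * X b : MvPolynomial (Fin 4) ℚ)) ≠ 0) (k : Fin 4) :
    m k = m' k - (if i = k then 1 else 0) +
      ((if a = k then 1 else 0) + (if b = k then 1 else 0)) := by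
  rw [smul_eq_mul, X, X, monomial_mul, monomial_mul, coeff_monomial] at h2
  split_ifs at h2 with hme
  · rw [← hme, Finsupp.add_apply, Finsupp.add_apply, Finsupp.tsub_apply,
      Finsupp.single_apply, Finsupp.single_apply, Finsupp.single_apply]
  · exact absurd rfl h2

lemma good (n : ℕ) : ∀ m : Fin 4 →₀ ℕ,
    MvPolynomial.coeff m ((fun p => Dg p)^[n] (X 0 : MvPolynomial (Fin 4) ℚ)) ≠ 0 →
    m 0 = 1 ∧ m 1 + m 2 + m 3 = n ∧ (m 1 + n) % 2 = 0 := by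
  induction n with
  | zero =>
    intro m hm
    simp only [Function.iterate_zero_apply, coeff_X'] at hm
    split_ifs at hm with h
    · subst h
      simp [Finsupp.single_apply]
    · exact absurd rfl hm
  | succ n ih =>
    intro m hm
    rw [Function.iterate_succ_apply'] at hm
    set q := (fun p => Dg p)^[n] (X 0 : MvPolynomial (Fin 4) ℚ) with hq
    rw [q.as_sum, map_sum, coeff_sum] at hm
    obtain ⟨m', hm's, h1⟩ := Finset.exists_ne_zero_of_sum_ne_zero hm
    have hm'q : coeff m' q ≠ 0 := mem_support_iff.mp hm's
    obtain ⟨e0, e123, epar⟩ := ih m' hm'q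
    rw [Dg_monomial, coeff_smul, Finsupp.sum, coeff_sum] at h1
    have h1' : ∃ i ∈ m'.support,
        coeff m (monomial (m' - Finsupp.single i 1) ((m' i : ℚ)) •
          ((![X 0 * X 1, X 2 * X 3, X 1 * X 3, X 1 * X 2] :
            Fin 4 → MvPolynomial (Fin 4) ℚ) i)) ≠ 0 := by
      by_contra hc
      push_neg at hc
      rw [Finset.sum_eq_zero hc] at h1
      simp at h1
    obtain ⟨i, hi, h2⟩ := h1'
    have him : m' i ≠ 0 := Finsupp.mem_support_iff.mp hi
    fin_cases i
    · have him' : m' 0 ≠ 0 := him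
      have hk := step_aux m m' 0 0 1 _ h2
      have h0 := hk 0; have hh1 := hk 1; have hh2 := hk 2; have hh3 := hk 3
      simp at h0 hh1 hh2 hh3
      omega
    · have him' : m' 1 ≠ 0 := him
      have hk := step_aux m m' 1 2 3 _ h2
      have h0 := hk 0; have hh1 := hk 1; have hh2 := hk 2; have hh3 := hk 3
      simp at h0 hh1 hh2 hh3
      omega
    · have him' : m' 2 ≠ 0 := him
      have hk := step_aux m m' 2 1 3 _ h2
      have h0 := hk 0; have hh1 := hk 1; have hh2 := hk 2; have hh3 := hk 3
      simp at h0 hh1 hh2 hh3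
      omega
    · have him' : m' 3 ≠ 0 := him
      have hk := step_aux m m' 3 1 2 _ h2
      have h0 := hk 0; have hh1 := hk 1; have hh2 := hk 2; have hh3 := hk 3
      simp at h0 hh1 hh2 hh3
      omega

lemma heval1 (i : Fin 4) : eval (fun _ => (1:ℚ))
    ((![X 0 * X 1, X 2 * X 3, X 1 * X 3, X 1 * X 2] : Fin 4 → MvPolynomial (Fin 4) ℚ) i) = 1 := by
  fin_cases i <;> simp

lemma eval_support (q : MvPolynomial (Fin 4) ℚ) :
    eval (fun _ => (1:ℚ)) q = ∑ m ∈ q.support, coeff m q := by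
  rw [eval_eq]; simp

lemma eval_fact (n : ℕ) :
    eval (fun _ => (1:ℚ)) ((fun p => Dg p)^[n] (X 0 : MvPolynomial (Fin 4) ℚ))
      = n.factorial := by
  induction n with
  | zero => simp
  | succ n ih =>
    rw [Function.iterate_succ_apply']
    set q := (fun p => Dg p)^[n] (X 0 : MvPolynomial (Fin 4) ℚ) with hq
    conv_lhs => rw [q.as_sum]
    rw [map_sum, map_sum]
    have key : ∀ m ∈ q.support,
        eval (fun _ => (1:ℚ)) (Dg (monomial m (coeff m q))) = (n+1 : ℚ) * coeff m q := by
      intro m hms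
      rw [Dg_monomial, smul_eq_C_mul, map_mul, eval_C, Finsupp.sum, map_sum]
      have each : ∀ i ∈ m.support,
          eval (fun _ => (1:ℚ)) (monomial (m - Finsupp.single i 1) ((m i : ℚ)) •
            ((![X 0 * X 1, X 2 * X 3, X 1 * X 3, X 1 * X 2] :
              Fin 4 → MvPolynomial (Fin 4) ℚ) i)) = (m i : ℚ) := by
        intro i _
        rw [smul_eq_mul, map_mul, eval_monomial, heval1 i]
        simp [Finsupp.prod]
      rw [Finset.sum_congr rfl each]
      have hsum : ∑ i ∈ m.support, (m i : ℚ) = ((n:ℚ)+1) := by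
        obtain ⟨h0, h123, _⟩ := good n m (mem_support_iff.mp hms)
        have hns : m.sum (fun _ k => k) = n + 1 := by
          rw [Finsupp.sum_fintype _ _ (fun _ => rfl), Fin.sum_univ_four]
          omega
        have : (∑ i ∈ m.support, (m i : ℚ)) = ((m.sum fun _ k => k : ℕ) : ℚ) := by
          rw [Finsupp.sum]; push_cast; rfl
        rw [this, hns]; push_cast; ring
      rw [hsum]; ring
    rw [Finset.sum_congr rfl key, ← Finset.mul_sum, ← eval_support, ih,
      Nat.factorial_succ]
    push_cast; ring

noncomputable def Mo (n i j : ℕ) : Fin 4 →₀ ℕ :=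
  Finsupp.single 0 1 + Finsupp.single 1 (2*i + n % 2) + Finsupp.single 2 j
    + Finsupp.single 3 (n - 2*i - j - n % 2)

lemma tC_eq (n i j : ℕ) :
    tC n (i:ℤ) (j:ℤ)
      = coeff (Mo n i j) ((fun p => Dg p)^[n] (X 0 : MvPolynomial (Fin 4) ℚ)) := by
  have hn2 : (n % 2 = 0 ∧ Even n) ∨ (n % 2 = 1 ∧ ¬ Even n) := by
    rcases Nat.even_or_odd n with h | h
    · exact Or.inl ⟨Nat.even_iff.mp h, h⟩
    · exact Or.inr ⟨Nat.odd_iff.mp h, (Nat.not_even_iff_odd).mpr h⟩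
  unfold tC Mo
  rw [if_pos ⟨Int.ofNat_nonneg i, Int.ofNat_nonneg j⟩]
  congr 1
  ext k
  rcases hn2 with ⟨h2, he⟩ | ⟨h2, he⟩ <;>
    fin_cases k <;> simp [he, Finsupp.add_apply, Finsupp.single_apply] <;> omega

theorem stmt10 (n : ℕ) (hn : 1 ≤ n) :
    ∑ i ∈ Finset.range (n+1), ∑ j ∈ Finset.range (n+1), tC n (i:ℤ) (j:ℤ)
      = (n.factorial : ℚ) := by
  have hP := good n
  set P := (fun p => Dg p)^[n] (X 0 : MvPolynomial (Fin 4) ℚ) with hPdef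
  have h1 : (∑ i ∈ Finset.range (n+1), ∑ j ∈ Finset.range (n+1), tC n (i:ℤ) (j:ℤ))
      = ∑ q ∈ Finset.range (n+1) ×ˢ Finset.range (n+1), coeff (Mo n q.1 q.2) P := by
    rw [Finset.sum_product]
    exact Finset.sum_congr rfl fun i _ => Finset.sum_congr rfl fun j _ => tC_eq n i j
  rw [h1]
  have hinj : ∀ q ∈ Finset.range (n+1) ×ˢ Finset.range (n+1),
      ∀ q' ∈ Finset.range (n+1) ×ˢ Finset.range (n+1),
      Mo n q.1 q.2 = Mo n q'.1 q'.2 → q = q' := by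
    intro q _ q' _ h
    have e1 : Mo n q.1 q.2 1 = Mo n q'.1 q'.2 1 := by rw [h]
    have e2 : Mo n q.1 q.2 2 = Mo n q'.1 q'.2 2 := by rw [h]
    simp [Mo, Finsupp.add_apply, Finsupp.single_apply] at e1 e2
    exact Prod.ext (by omega) (by omega)
  have himg : ∑ m ∈ (Finset.range (n+1) ×ˢ Finset.range (n+1)).image
        (fun q : ℕ × ℕ => Mo n q.1 q.2), coeff m P
      = ∑ q ∈ Finset.range (n+1) ×ˢ Finset.range (n+1), coeff (Mo n q.1 q.2) P :=
    Finset.sum_image hinj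
  rw [← himg]
  have hsub : P.support ⊆ (Finset.range (n+1) ×ˢ Finset.range (n+1)).image
      (fun q : ℕ × ℕ => Mo n q.1 q.2) := by
    intro m hm
    obtain ⟨h0, h123, hpar⟩ := hP m (mem_support_iff.mp hm)
    refine Finset.mem_image.mpr ⟨(m 1 / 2, m 2), Finset.mem_product.mpr
      ⟨Finset.mem_range.mpr (by omega), Finset.mem_range.mpr (by omega)⟩, ?_⟩
    ext k
    fin_cases k <;> simp [Mo, Finsupp.add_apply, Finsupp.single_apply] <;> omega
  rw [← Finset.sum_subset hsub (fun m _ hm => notMem_support_iff.mp hm),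
    ← eval_support, hPdef, eval_fact]
end

section
/- For all n ≥ 1 and i ≥ 0, Σ_{j≥0} t_{n,i,j} = P̃_{n, ⌊n/2⌋ - i}, where P̃_{n,k} is the number of permutations of [n] with k left peaks. -/
open MvPolynomial Finset

/-- The value of `π` at position `m` (1-indexed), with `π(0) = 0` and values in `{1,…,n}`. -/
def permVal (n : ℕ) (π : Equiv.Perm (Fin n)) (m : ℕ) : ℕ :=
  if h : 1 ≤ m ∧ m ≤ n then (π ⟨m-1, by omega⟩ : ℕ) + 1 else 0

/-- The number of left peaks of `π`: indices `i ∈ [n-1]` with `π(i-1) < π(i) > π(i+1)`,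
where `π(0) = 0`. -/
def leftPeaks (n : ℕ) (π : Equiv.Perm (Fin n)) : ℕ :=
  ((Finset.Icc 1 (n-1)).filter fun m =>
    permVal n π (m-1) < permVal n π m ∧ permVal n π (m+1) < permVal n π m).card

/-- `leftPeakCount n k = P̃_{n,k}` (with `ℤ`-valued index, zero for negative `k`): the number
of permutations of `[n]` with exactly `k` left peaks. -/
noncomputable def leftPeakCount (n : ℕ) (k : ℤ) : ℕ :=
  Nat.card {π : Equiv.Perm (Fin n) // (leftPeaks n π : ℤ) = k}

/-!
Substituting `y = z = u` turns the grammar into `w → wx, x → u², u → xu`, and since `D^n(w)` is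
homogeneous of degree `n + 1`, `∑_j t_{n,i,j}` becomes the coefficient `S(n, a)` of `w x^a u^(n-a)`
in the `n`-th derivative of `w` for this merged grammar, where `a = 2i + (n mod 2)`. Reading off
coefficients of the merged derivation gives `S(n+1, a) = (n - a + 2) S(n, a-1) + (a + 1) S(n, a+1)`.

On the permutation side, inserting `n + 1` into `σ ∈ S_n` at position `p + 1` destroys the left
peaks of `σ` at `p` and `p + 1` (at most one of them exists) and creates one at `p + 1` unless
`p = n`. So a permutation with `j` left peaks has `2j + 1` insertions keeping `j` peaks and `n - 2j`
raising them to `j + 1`, whence `P̃_{n+1,k} = (2k + 1) P̃_{n,k} + (n - 2k + 2) P̃_{n,k-1}`.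
With `a = n - 2k` the two recurrences agree, and so do the initial values at `n = 0`.
-/

namespace MvPolynomial

variable {R σ τ : Type*} [CommSemiring R]

theorem derivation_eq_sum_pderiv [Fintype σ] [DecidableEq σ]
    (D : Derivation R (MvPolynomial σ R) (MvPolynomial σ R)) (p : MvPolynomial σ R) :
    D p = ∑ i, D (X i) * pderiv i p := by
  have sum_apply : ∀ q, (∑ i, D (X i) • pderiv i) q = ∑ i, D (X i) * pderiv i q := fun q => by
    rw [← Derivation.coeFnAddMonoidHom_apply, map_sum, Finset.sum_apply]
    rfl
  have hD : D = ∑ i, D (X i) • pderiv i := derivation_ext fun j => by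
    simp [sum_apply, pderiv_X, Pi.single_apply]
  exact (DFunLike.congr_fun hD p).trans (sum_apply p)

theorem IsHomogeneous.derivation_apply [Fintype σ]
    {D : Derivation R (MvPolynomial σ R) (MvPolynomial σ R)} {k n : ℕ}
    (hD : ∀ i, (D (X i)).IsHomogeneous (k + 1)) {p : MvPolynomial σ R}
    (hp : p.IsHomogeneous (n + 1)) : (D p).IsHomogeneous (k + 1 + n) := by
  classical
  rw [derivation_eq_sum_pderiv]
  exact IsHomogeneous.sum _ _ _ fun i _ => (hD i).mul hp.pderiv

theorem rename_derivation_apply {f : σ → τ}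
    (D : Derivation R (MvPolynomial σ R) (MvPolynomial σ R))
    (D' : Derivation R (MvPolynomial τ R) (MvPolynomial τ R))
    (h : ∀ i, rename f (D (X i)) = D' (X (f i))) (p : MvPolynomial σ R) :
    rename f (D p) = D' (rename f p) := by
  induction p using MvPolynomial.induction_on with
  | C a => simp [← algebraMap_eq]
  | add p q hp hq => simp [hp, hq]
  | mul_X p i hp => simp [Derivation.leibniz, hp, h]

theorem coeff_rename_eq_sum {f : σ → τ} (p : MvPolynomial σ R) (d : τ →₀ ℕ)
    (S : Finset (σ →₀ ℕ)) (hS : ∀ s, s ∈ S ↔ s.mapDomain f = d) :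
    coeff d (rename f p) = ∑ s ∈ S, coeff s p := by
  classical
  induction p using MvPolynomial.induction_on' with
  | monomial s r => simp only [rename_monomial, coeff_monomial, sum_ite_eq, hS]
  | add p q hp hq => simp [hp, hq, sum_add_distrib]

end MvPolynomial

/-- The grammar `w → wx, x → u², u → xu` on `ℚ[w, x, u]`, obtained from `Dg` by `y, z ↦ u`. -/
noncomputable def DgMerged : Derivation ℚ (MvPolynomial (Fin 3) ℚ) (MvPolynomial (Fin 3) ℚ) :=
  mkDerivation ℚ ![X 0 * X 1, X 2 ^ 2, X 1 * X 2]

def mergeYZ : Fin 4 → Fin 3 := ![0, 1, 2, 2]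

noncomputable def wxu (a c : ℕ) : Fin 3 →₀ ℕ :=
  Finsupp.single 0 1 + Finsupp.single 1 a + Finsupp.single 2 c

noncomputable def wxyz (a b c : ℕ) : Fin 4 →₀ ℕ :=
  Finsupp.single 0 1 + Finsupp.single 1 a + Finsupp.single 2 b + Finsupp.single 3 c

theorem wxu_apply (a c : ℕ) (i : Fin 3) : wxu a c i = ![1, a, c] i := by
  fin_cases i <;> simp [wxu]

theorem degree_wxu (a c : ℕ) : (wxu a c).degree = 1 + a + c := by
  simp [wxu, Finsupp.degree_single]

theorem degree_wxyz (a b c : ℕ) : (wxyz a b c).degree = 1 + a + b + c := by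
  simp [wxyz, Finsupp.degree_single]

theorem rename_mergeYZ_Dg (p : MvPolynomial (Fin 4) ℚ) :
    rename mergeYZ (Dg p) = DgMerged (rename mergeYZ p) :=
  rename_derivation_apply Dg DgMerged (fun i => by
    fin_cases i <;> simp [Dg, DgMerged, mergeYZ, mkDerivation_X, pow_two]) p

theorem rename_mergeYZ_iterate_Dg (n : ℕ) :
    rename mergeYZ ((fun p => Dg p)^[n] (X 0)) = (fun p => DgMerged p)^[n] (X 0) := by
  rw [Function.Semiconj.iterate_right (fun p => rename_mergeYZ_Dg p) n (X 0), rename_X]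
  rfl

theorem isHomogeneous_iterate_Dg (n : ℕ) :
    ((fun p => Dg p)^[n] (X 0)).IsHomogeneous (n + 1) := by
  induction n with
  | zero => exact isHomogeneous_X ℚ 0
  | succ n ih =>
    have hX : ∀ i, (Dg (X i)).IsHomogeneous (1 + 1) := fun i => by
      fin_cases i <;>
        simpa [Dg, mkDerivation_X] using (isHomogeneous_X ℚ _).mul (isHomogeneous_X ℚ _)
    rw [Function.iterate_succ_apply']
    convert ih.derivation_apply hX using 1
    omega

theorem mapDomain_mergeYZ_eq_wxu_iff (s : Fin 4 →₀ ℕ) (a c : ℕ) :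
    s.mapDomain mergeYZ = wxu a c ↔ ∃ j ≤ c, s = wxyz a j (c - j) := by
  have hs : s = Finsupp.single 0 (s 0) + Finsupp.single 1 (s 1) + Finsupp.single 2 (s 2)
      + Finsupp.single 3 (s 3) := by
    ext i; fin_cases i <;> simp
  rw [hs]
  simp only [Finsupp.mapDomain_add, Finsupp.mapDomain_single]
  simp only [mergeYZ, Fin.isValue, Matrix.cons_val_zero, Matrix.cons_val_one, Matrix.cons_val, wxu,
    Finsupp.ext_iff, Finsupp.coe_add, Pi.add_apply, Finsupp.single_apply, Fin.forall_fin_succ,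
    ↓reduceIte, one_ne_zero, add_zero, Fin.reduceEq, Fin.succ_zero_eq_one, zero_ne_one, zero_add,
    Fin.succ_one_eq_two, IsEmpty.forall_iff, and_true, wxyz, Finsupp.single_tsub, Finsupp.coe_tsub,
    Pi.sub_apply, tsub_self, Fin.reduceSucc, ↓existsAndEq, true_and]
  omega

theorem coeff_wxu_rename_mergeYZ (p : MvPolynomial (Fin 4) ℚ) (a c : ℕ) :
    coeff (wxu a c) (rename mergeYZ p) = ∑ j ∈ range (c + 1), coeff (wxyz a j (c - j)) p := by
  rw [coeff_rename_eq_sum p _ ((range (c + 1)).image fun j => wxyz a j (c - j))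
    fun s => by rw [mapDomain_mergeYZ_eq_wxu_iff]; simp [eq_comm], sum_image]
  intro j _ j' _ h
  simpa [wxyz] using DFunLike.congr_fun h 2

theorem coeff_wxu_DgMerged (p : MvPolynomial (Fin 3) ℚ) (a c : ℕ) :
    coeff (wxu a c) (DgMerged p)
      = (if 1 ≤ a then (c + 1) * coeff (wxu (a - 1) c) p else 0)
        + (if 2 ≤ c then (a + 1) * coeff (wxu (a + 1) (c - 2)) p else 0) := by
  have hX : ∀ i j : Fin 3, (X i * X j : MvPolynomial (Fin 3) ℚ)
      = monomial (Finsupp.single i 1 + Finsupp.single j 1) 1 := fun i j => by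
    rw [X, X, monomial_mul, one_mul]
  have hle : ∀ s : Fin 3 →₀ ℕ, s ≤ wxu a c ↔ s 0 ≤ 1 ∧ s 1 ≤ a ∧ s 2 ≤ c := fun s => by
    simp [Finsupp.le_def, Fin.forall_fin_succ, wxu_apply]
  have hw : wxu a c - (Finsupp.single 0 1 + Finsupp.single 1 1) + Finsupp.single 0 1
      = wxu (a - 1) c := by
    ext i; fin_cases i <;> simp [wxu_apply]
  have hx : wxu a c - (Finsupp.single 2 1 + Finsupp.single 2 1) + Finsupp.single 1 1
      = wxu (a + 1) (c - 2) := by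
    ext i; fin_cases i <;> simp [wxu_apply]
  have hu : wxu a c - (Finsupp.single 1 1 + Finsupp.single 2 1) + Finsupp.single 2 1
      = wxu (a - 1) (c - 1 + 1) := by
    ext i; fin_cases i <;> simp [wxu_apply]
  rw [derivation_eq_sum_pderiv, Fin.sum_univ_three]
  simp only [DgMerged, mkDerivation_X, Matrix.cons_val, pow_two, hX, coeff_add,
    coeff_monomial_mul', coeff_pderiv, one_mul, hw, hx, hu, hle, Finsupp.coe_add, Finsupp.coe_tsub,
    Pi.add_apply, Pi.sub_apply, wxu_apply, Finsupp.single_apply]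
  simp only [↓reduceIte, Fin.isValue, one_ne_zero, add_zero, le_refl, zero_ne_one, zero_add,
    Fin.reduceEq, zero_le, and_true, true_and, tsub_self, CharP.cast_eq_zero, mul_one,
    Nat.reduceAdd, tsub_zero]
  rcases Nat.eq_zero_or_pos c with rfl | hc
  · simp
  · simp only [Nat.sub_add_cancel hc, Nat.cast_pred hc, Nat.one_le_iff_ne_zero.mpr hc.ne',
      and_true]
    split_ifs <;> ring

noncomputable def mergedCoeff (n a : ℕ) : ℚ :=
  coeff (wxu a (n - a)) ((fun p => DgMerged p)^[n] (X 0))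

theorem mergedCoeff_eq_zero {n a : ℕ} (h : n < a) : mergedCoeff n a = 0 := by
  rw [mergedCoeff, ← rename_mergeYZ_iterate_Dg]
  exact (isHomogeneous_iterate_Dg n).rename_isHomogeneous.coeff_eq_zero (by rw [degree_wxu]; omega)

theorem tC_eq_coeff_wxyz (n i j : ℕ) :
    tC n i j = coeff (wxyz (2 * i + n % 2) j (n - (2 * i + n % 2) - j))
      ((fun p => Dg p)^[n] (X 0)) := by
  rw [tC, if_pos ⟨by positivity, by positivity⟩, wxyz]
  rcases Nat.even_or_odd n with hn | hn
  · simp only [if_pos hn, Nat.even_iff.mp hn]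
    congr
    omega
  · simp only [if_neg (Nat.not_even_iff_odd.mpr hn), Nat.odd_iff.mp hn]
    congr
    omega

theorem sum_tC_eq_mergedCoeff (n i : ℕ) :
    ∑ j ∈ range (n + 1), tC n i j = mergedCoeff n (2 * i + n % 2) := by
  set a := 2 * i + n % 2
  have hzero : ∀ j ∈ range (n + 1), j ∉ range (n - a + 1) →
      coeff (wxyz a j (n - a - j)) ((fun p => Dg p)^[n] (X 0)) = 0 := fun j _ hj => by
    rw [mem_range] at hj
    exact (isHomogeneous_iterate_Dg n).coeff_eq_zero (by rw [degree_wxyz]; omega)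
  simp only [tC_eq_coeff_wxyz]
  rw [← sum_subset (range_subset_range.mpr (by omega)) hzero, mergedCoeff,
    ← rename_mergeYZ_iterate_Dg, coeff_wxu_rename_mergeYZ]

def peakSet (v : ℕ → ℕ) (n : ℕ) : Finset ℕ :=
  (Icc 1 (n - 1)).filter fun m => v (m - 1) < v m ∧ v (m + 1) < v m

def insertAt (v : ℕ → ℕ) (p M : ℕ) : ℕ → ℕ := fun x =>
  if x ≤ p then v x else if x = p + 1 then M else v (x - 1)

theorem leftPeaks_eq_card_peakSet (n : ℕ) (π : Equiv.Perm (Fin n)) :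
    leftPeaks n π = (peakSet (permVal n π) n).card := rfl

theorem mem_peakSet {v : ℕ → ℕ} {n m : ℕ} :
    m ∈ peakSet v n ↔ (1 ≤ m ∧ m ≤ n - 1) ∧ v (m - 1) < v m ∧ v (m + 1) < v m := by
  rw [peakSet, mem_filter, mem_Icc]

theorem succ_notMem_peakSet {v : ℕ → ℕ} {n m : ℕ} (hm : m ∈ peakSet v n) :
    m + 1 ∉ peakSet v n := by
  rw [mem_peakSet] at hm ⊢
  simp only [Nat.add_sub_cancel]
  omega

theorem mem_peakSet_insertAt {v : ℕ → ℕ} {M : ℕ} (hM : ∀ x, v x < M) {n p : ℕ} (hp : p ≤ n)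
    (m : ℕ) : m ∈ peakSet (insertAt v p M) (n + 1) ↔
      (m ∈ peakSet v n ∧ m < p) ∨ (m = p + 1 ∧ p < n) ∨ (m - 1 ∈ peakSet v n ∧ p + 2 < m) := by
  rcases m with _ | m
  · simp [mem_peakSet]
  · have := hM (m - 1); have := hM m; have := hM (m + 1); have := hM (m + 1 + 1)
    simp only [mem_peakSet, insertAt, Nat.add_sub_cancel]
    split_ifs <;> omega

theorem card_eq_card_filter_lt_add_card_filter_gt (s : Finset ℕ) (p : ℕ) :
    s.card = (s.filter (· < p)).card + (s.filter (p + 1 < ·)).card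
      + (if p ∈ s then 1 else 0) + (if p + 1 ∈ s then 1 else 0) := by
  rw [card_filter, card_filter, ← sum_ite_eq s p fun _ => 1, ← sum_ite_eq s (p + 1) fun _ => 1,
    card_eq_sum_ones, ← sum_add_distrib, ← sum_add_distrib, ← sum_add_distrib]
  refine sum_congr rfl fun m _ => ?_
  split_ifs <;> omega

theorem card_peakSet_insertAt {v : ℕ → ℕ} {M : ℕ} (hM : ∀ x, v x < M) {n p : ℕ} (hp : p ≤ n) :
    (peakSet (insertAt v p M) (n + 1)).card + (if p ∈ peakSet v n then 1 else 0)
      + (if p + 1 ∈ peakSet v n then 1 else 0) = (peakSet v n).card + (if p < n then 1 else 0) := by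
  set P := peakSet v n
  set P' := peakSet (insertAt v p M) (n + 1)
  have hlt : P'.filter (· < p) = P.filter (· < p) := by
    ext m
    simp only [P', mem_filter, mem_peakSet_insertAt hM hp]
    constructor
    · rintro ⟨h | h | h, hm⟩
      · exact h
      all_goals omega
    · rintro ⟨h, hm⟩
      exact ⟨Or.inl ⟨h, hm⟩, hm⟩
  have hgt : P'.filter (p + 1 < ·) = (P.filter (p + 1 < ·)).map (addRightEmbedding 1) := by
    ext m
    simp only [P', mem_filter, mem_map, addRightEmbedding_apply, mem_peakSet_insertAt hM hp]
    constructor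
    · rintro ⟨h | h | ⟨h, hm⟩, hm'⟩
      · omega
      · omega
      · exact ⟨m - 1, ⟨h, by omega⟩, by omega⟩
    · rintro ⟨q, ⟨hq, hq'⟩, rfl⟩
      exact ⟨Or.inr (Or.inr ⟨by simpa using hq, by omega⟩), by omega⟩
  have hp' : p ∉ P' := by
    rw [mem_peakSet_insertAt hM hp]
    omega
  have hp1 : p + 1 ∈ P' ↔ p < n := by
    rw [mem_peakSet_insertAt hM hp]
    omega
  rw [card_eq_card_filter_lt_add_card_filter_gt P' p, card_eq_card_filter_lt_add_card_filter_gt P p,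
    hlt, hgt, card_map, if_neg hp']
  simp only [hp1]
  omega

theorem card_peakSet_insertAt_bounds {v : ℕ → ℕ} {M : ℕ} (hM : ∀ x, v x < M) {n p : ℕ}
    (hp : p ≤ n) : (peakSet v n).card ≤ (peakSet (insertAt v p M) (n + 1)).card ∧
      (peakSet (insertAt v p M) (n + 1)).card ≤ (peakSet v n).card + 1 := by
  have h := card_peakSet_insertAt hM hp
  by_cases hpn : p < n
  · rw [if_pos hpn] at h
    split_ifs at h with h1 h2
    · exact absurd h2 (succ_notMem_peakSet h1)
    all_goals omega
  · have hlast : ∀ m ∈ peakSet v n, m < p := fun m hm => by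
      have := (mem_peakSet.mp hm).1
      omega
    rw [if_neg hpn, if_neg fun h' => (hlast p h').false,
      if_neg fun h' => by have := hlast _ h'; omega] at h
    omega

theorem sum_range_ite_mem {s : Finset ℕ} {N : ℕ} (hs : s ⊆ range N) :
    ∑ p ∈ range N, (if p ∈ s then 1 else 0) = s.card := by
  rw [sum_boole, Nat.cast_id, filter_mem_eq_inter, inter_eq_right.mpr hs]

theorem sum_card_peakSet_insertAt {v : ℕ → ℕ} {M : ℕ} (hM : ∀ x, v x < M) (n : ℕ) :
    ∑ p ∈ range (n + 1), (peakSet (insertAt v p M) (n + 1)).card + 2 * (peakSet v n).card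
      = (n + 1) * (peakSet v n).card + n := by
  set P := peakSet v n
  have hP : ∀ m ∈ P, 1 ≤ m ∧ m ≤ n - 1 := fun m hm => (mem_peakSet.mp hm).1
  have hsum := sum_congr (s₁ := range (n + 1)) rfl fun p hp =>
    card_peakSet_insertAt hM (Nat.lt_succ_iff.mp (mem_range.mp hp))
  have hmem : ∑ p ∈ range (n + 1), (if p ∈ P then 1 else 0) = P.card :=
    sum_range_ite_mem fun m hm => mem_range.mpr (by have := hP m hm; omega)
  have hsucc : ∑ p ∈ range (n + 1), (if p + 1 ∈ P then 1 else 0) = P.card := by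
    have h := sum_range_ite_mem (s := P) (N := n + 2) fun m hm =>
      mem_range.mpr (by have := hP m hm; omega)
    rwa [sum_range_succ', if_neg fun h0 => by have := hP 0 h0; omega, add_zero] at h
  have hlt : ∑ p ∈ range (n + 1), (if p < n then 1 else 0) = n := by
    rw [sum_range_succ, if_neg (lt_irrefl n), add_zero,
      sum_congr rfl fun p hp => if_pos (mem_range.mp hp), sum_const, card_range, smul_eq_mul,
      mul_one]
  rw [sum_add_distrib, sum_add_distrib, sum_add_distrib, hmem, hsucc, hlt, sum_const, card_range,
    smul_eq_mul] at hsum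
  linarith

/-- The permutation of `[n + 1]` whose one-line notation is that of `σ` with `n + 1` inserted
at position `p + 1` (`Fin` is `0`-indexed, `permVal` `1`-indexed). -/
def insertMax {n : ℕ} (σ : Equiv.Perm (Fin n)) (p : Fin (n + 1)) : Equiv.Perm (Fin (n + 1)) :=
  (finSuccEquiv' p).trans (σ.optionCongr.trans finSuccEquivLast.symm)

theorem insertMax_apply_self {n : ℕ} (σ : Equiv.Perm (Fin n)) (p : Fin (n + 1)) :
    insertMax σ p p = Fin.last n := by
  simp [insertMax, finSuccEquiv'_at]

theorem insertMax_apply_succAbove {n : ℕ} (σ : Equiv.Perm (Fin n)) (p : Fin (n + 1))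
    (j : Fin n) : insertMax σ p (p.succAbove j) = (σ j).castSucc := by
  simp [insertMax, finSuccEquiv'_succAbove]

theorem insertMax_bijective (n : ℕ) :
    Function.Bijective fun q : Equiv.Perm (Fin n) × Fin (n + 1) => insertMax q.1 q.2 := by
  rw [Fintype.bijective_iff_injective_and_card]
  refine ⟨fun ⟨σ, p⟩ ⟨σ', p'⟩ h => ?_, by simp [Fintype.card_perm, Nat.factorial_succ, mul_comm]⟩
  simp only at h
  obtain rfl : p = p' := by
    by_contra hne
    obtain ⟨j, hj⟩ := Fin.exists_succAbove_eq hne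
    have := insertMax_apply_self σ p
    rw [h, ← hj, insertMax_apply_succAbove] at this
    exact (Fin.castSucc_lt_last _).ne this
  obtain rfl : σ = σ' := Equiv.ext fun j => Fin.castSucc_injective n <| by
    rw [← insertMax_apply_succAbove, ← insertMax_apply_succAbove, h]
  rfl

theorem permVal_zero {n : ℕ} (π : Equiv.Perm (Fin n)) : permVal n π 0 = 0 := by
  simp [permVal]

theorem permVal_succ {n : ℕ} (π : Equiv.Perm (Fin n)) (i : Fin n) :
    permVal n π (i + 1) = π i + 1 := by
  simp [permVal, i.isLt]

theorem permVal_of_lt {n x : ℕ} (π : Equiv.Perm (Fin n)) (hx : n < x) : permVal n π x = 0 :=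
  dif_neg (by omega)

theorem permVal_lt {n : ℕ} (π : Equiv.Perm (Fin n)) (x : ℕ) : permVal n π x < n + 1 := by
  unfold permVal
  split_ifs
  · simp
  · omega

theorem permVal_insertMax {n : ℕ} (σ : Equiv.Perm (Fin n)) (p : Fin (n + 1)) :
    permVal (n + 1) (insertMax σ p) = insertAt (permVal n σ) p (n + 1) := by
  funext x
  rcases x with _ | x
  · simp [permVal_zero, insertAt]
  rcases lt_or_ge x (n + 1) with hx | hx
  · obtain ⟨i, rfl⟩ : ∃ i : Fin (n + 1), (i : ℕ) = x := ⟨⟨x, hx⟩, rfl⟩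
    rw [permVal_succ]
    rcases Fin.eq_self_or_eq_succAbove p i with rfl | ⟨j, rfl⟩
    · simp [insertMax_apply_self, insertAt]
    rw [insertMax_apply_succAbove, Fin.val_castSucc, ← permVal_succ]
    rcases lt_or_ge j.castSucc p with hj | hj
    · rw [Fin.succAbove_of_castSucc_lt _ _ hj, insertAt, Fin.val_castSucc,
        if_pos (by simpa [Fin.lt_def] using hj)]
    · rw [Fin.le_def, Fin.val_castSucc] at hj
      rw [Fin.succAbove_of_le_castSucc _ _ (Fin.le_def.mpr hj), insertAt, Fin.val_succ,
        if_neg (by omega), if_neg (by omega)]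
      rfl
  · rw [permVal_of_lt _ (by omega), insertAt, if_neg (by omega), if_neg (by omega),
      permVal_of_lt _ (by omega)]

theorem leftPeaks_insertMax_bounds {n : ℕ} (σ : Equiv.Perm (Fin n)) (p : Fin (n + 1)) :
    leftPeaks n σ ≤ leftPeaks (n + 1) (insertMax σ p) ∧
      leftPeaks (n + 1) (insertMax σ p) ≤ leftPeaks n σ + 1 := by
  simp only [leftPeaks_eq_card_peakSet, permVal_insertMax]
  exact card_peakSet_insertAt_bounds (permVal_lt σ) (Nat.lt_succ_iff.mp p.isLt)

theorem sum_leftPeaks_insertMax {n : ℕ} (σ : Equiv.Perm (Fin n)) :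
    ∑ p, leftPeaks (n + 1) (insertMax σ p) + 2 * leftPeaks n σ = (n + 1) * leftPeaks n σ + n := by
  simp only [leftPeaks_eq_card_peakSet, permVal_insertMax]
  rw [Fin.sum_univ_eq_sum_range fun p => (peakSet (insertAt (permVal n σ) p (n + 1)) (n + 1)).card]
  exact sum_card_peakSet_insertAt (permVal_lt σ) n

theorem two_mul_leftPeaks_le {n : ℕ} (σ : Equiv.Perm (Fin n)) : 2 * leftPeaks n σ ≤ n := by
  have hle : ∑ _p : Fin (n + 1), leftPeaks n σ ≤ ∑ p, leftPeaks (n + 1) (insertMax σ p) :=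
    sum_le_sum fun p _ => (leftPeaks_insertMax_bounds σ p).1
  have := sum_leftPeaks_insertMax σ
  simp only [sum_const, card_univ, Fintype.card_fin, smul_eq_mul] at hle
  nlinarith

theorem sum_ite_leftPeaks_insertMax_eq {n : ℕ} (σ : Equiv.Perm (Fin n)) (k : ℤ) :
    ∑ p, (if (leftPeaks (n + 1) (insertMax σ p) : ℤ) = k then 1 else 0 : ℚ)
      = (if (leftPeaks n σ : ℤ) = k then 2 * (k : ℚ) + 1 else 0)
        + (if (leftPeaks n σ : ℤ) = k - 1 then (n : ℚ) - 2 * k + 2 else 0) := by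
  have hg : ∀ p, leftPeaks (n + 1) (insertMax σ p) = leftPeaks n σ ∨
      leftPeaks (n + 1) (insertMax σ p) = leftPeaks n σ + 1 := fun p => by
    have := leftPeaks_insertMax_bounds σ p
    omega
  have hsum : ∑ p, ((leftPeaks (n + 1) (insertMax σ p) : ℚ) - leftPeaks n σ)
      = n - 2 * leftPeaks n σ := by
    have := congrArg (Nat.cast (R := ℚ)) (sum_leftPeaks_insertMax σ)
    push_cast at this
    rw [sum_sub_distrib, sum_const, card_univ, Fintype.card_fin, nsmul_eq_mul]
    push_cast
    linarith
  by_cases hk : (leftPeaks n σ : ℤ) = k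
  · have hpt : ∀ p, (if (leftPeaks (n + 1) (insertMax σ p) : ℤ) = k then 1 else 0 : ℚ)
        = 1 - ((leftPeaks (n + 1) (insertMax σ p) : ℚ) - leftPeaks n σ) := fun p => by
      rcases hg p with h | h <;> simp [h, ← hk]
    rw [sum_congr rfl fun p _ => hpt p, sum_sub_distrib, hsum, if_pos hk, if_neg (by omega)]
    simp [← hk]
    ring
  by_cases hk' : (leftPeaks n σ : ℤ) = k - 1
  · have hpt : ∀ p, (if (leftPeaks (n + 1) (insertMax σ p) : ℤ) = k then 1 else 0 : ℚ)
        = (leftPeaks (n + 1) (insertMax σ p) : ℚ) - leftPeaks n σ := fun p => by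
      rcases hg p with h | h <;> simp [h, hk]
      omega
    rw [sum_congr rfl fun p _ => hpt p, hsum, if_neg hk, if_pos hk',
      show (leftPeaks n σ : ℚ) = k - 1 by exact_mod_cast hk']
    ring
  · have hpt : ∀ p, (if (leftPeaks (n + 1) (insertMax σ p) : ℤ) = k then 1 else 0 : ℚ) = 0 :=
      fun p => if_neg (by rcases hg p with h | h <;> omega)
    simp [hpt, hk, hk']

theorem leftPeakCount_eq_sum (n : ℕ) (k : ℤ) :
    (leftPeakCount n k : ℚ) = ∑ π, if (leftPeaks n π : ℤ) = k then 1 else 0 := by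
  rw [leftPeakCount, Nat.card_eq_fintype_card, Fintype.card_subtype, card_filter]
  push_cast
  rfl

theorem leftPeakCount_succ (n : ℕ) (k : ℤ) :
    (leftPeakCount (n + 1) k : ℚ)
      = (2 * k + 1) * leftPeakCount n k + (n - 2 * k + 2) * leftPeakCount n (k - 1) := by
  rw [leftPeakCount_eq_sum, ← Fintype.sum_bijective _ (insertMax_bijective n) _ _ fun _ => rfl,
    Fintype.sum_prod_type]
  simp only [sum_ite_leftPeaks_insertMax_eq, sum_add_distrib, leftPeakCount_eq_sum, mul_sum]
  congr 1 <;> refine sum_congr rfl fun σ _ => ?_ <;> split_ifs <;> ring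

theorem leftPeakCount_eq_zero {n : ℕ} {k : ℤ} (hk : k < 0 ∨ (n : ℤ) < 2 * k) :
    leftPeakCount n k = 0 := by
  rw [leftPeakCount, Nat.card_eq_zero]
  exact Or.inl ⟨fun ⟨π, hπ⟩ => by have := two_mul_leftPeaks_le π; omega⟩

theorem mergedCoeff_eq_leftPeakCount (n : ℕ) :
    ∀ a k : ℕ, a + 2 * k = n → mergedCoeff n a = leftPeakCount n k := by
  induction n with
  | zero =>
    intro a k h
    obtain ⟨rfl, rfl⟩ : a = 0 ∧ k = 0 := by omega
    have : leftPeakCount 0 0 = 1 := by simp [leftPeakCount, leftPeaks]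
    simp [mergedCoeff, wxu, this, coeff_X]
  | succ n ih =>
    intro a k h
    have hq : (n : ℚ) + 1 = a + 2 * k := by exact_mod_cast h.symm
    rw [mergedCoeff, Function.iterate_succ_apply', coeff_wxu_DgMerged, leftPeakCount_succ]
    congr 1
    · split_ifs with ha
      · rw [show n + 1 - a = n - (a - 1) by omega, ← mergedCoeff, ih (a - 1) k (by omega),
          show n - (a - 1) = 2 * k by omega]
        push_cast
        ring
      · rw [leftPeakCount_eq_zero (n := n) (k := k) (Or.inr (by omega))]
        simp
    · split_ifs with hk
      · rw [show n + 1 - a - 2 = n - (a + 1) by omega, ← mergedCoeff, ih (a + 1) (k - 1) (by omega),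
          Nat.cast_sub (by omega : 1 ≤ k)]
        push_cast
        linear_combination -(leftPeakCount n (k - 1) : ℚ) * hq
      · rw [leftPeakCount_eq_zero (n := n) (k := k - 1) (Or.inl (by omega))]
        simp

theorem stmt12_general (n : ℕ) (i : ℕ) :
    ∑ j ∈ Finset.range (n+1), tC n (i:ℤ) (j:ℤ)
      = (leftPeakCount n (((n/2 : ℕ) : ℤ) - (i:ℤ)) : ℚ) := by
  rw [sum_tC_eq_mergedCoeff]
  rcases le_or_gt i (n / 2) with hi | hi
  · rw [mergedCoeff_eq_leftPeakCount n _ (n / 2 - i) (by omega)]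
    congr 2
    omega
  · rw [mergedCoeff_eq_zero (by omega), leftPeakCount_eq_zero (Or.inl (by omega)), Nat.cast_zero]

theorem stmt12 (n : ℕ) (hn : 1 ≤ n) (i : ℕ) :
    ∑ j ∈ Finset.range (n+1), tC n (i:ℤ) (j:ℤ)
      = (leftPeakCount n (((n/2 : ℕ) : ℤ) - (i:ℤ)) : ℚ) :=
  stmt12_general n i
end

section
/- For all n ≥ 0 and i ≥ 0, the convolution identities t_{2n+1,i,0} = Σ_{k≥0} C(2n,2k) Σ_{j=0}^i t_{2k,j,0} s_{2n-2k,i-j,0} and t_{2n+2,i+1,0} = Σ_{k≥0} C(2n+1,2k+1) Σ_{j=0}^i t_{2k+1,j,0} s_{2n-2k,i-j,0} hold. -/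
/-!
Since `D w = w x`, Leibniz's rule gives `D^(N+1) w = ∑ₖ C(N,k) D^k(w) D^(N-k)(x)`. Specialising
`w = z = 1`, `y = 0` is a ring map to `ℚ[x]`; on the monomials that survive it loses no
information, because every monomial of `D^k w` has the form `w x^a y^b z^c` with
`a + b + c = k`, and every monomial of `D^m x` has `x`-, `y`-, `z`-degrees summing to `m + 1`.
Both `t_{k,·,0}` and `s_{m,·,0}` thus become coefficients of polynomials in `x`. Moreover the
`y`-degree of every monomial of `D^m x` has the parity of `m`, so the odd `m` drop out, and the
`x`-degrees of `D^k w` and `D^m x` have the parities of `k` and `m + 1`, which turns the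
coefficient of a product into the convolution over `j`.
-/

open MvPolynomial Finset

/-- `sC n i j` is the Dumont coefficient `s_{n,i,j}` of `D^n(x)`:
for even `n`, the coefficient of `x^(2i+1) y^(2j) z^(n-2i-2j)`;
for odd `n`, the coefficient of `x^(2i) y^(2j+1) z^(n-2i-2j)`.
Coefficients with negative indices are `0`. -/
noncomputable def sC (n : ℕ) (i j : ℤ) : ℚ :=
  if 0 ≤ i ∧ 0 ≤ j then
    MvPolynomial.coeff
      (Finsupp.single 1 ((if Even n then 2*i+1 else 2*i).toNat)
        + Finsupp.single 2 ((if Even n then 2*j else 2*j+1).toNat)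
        + Finsupp.single 3 (((n:ℤ) - 2*i - 2*j).toNat))
      ((fun p => Dg p)^[n] (X 1))
  else 0

theorem Derivation.iterate_apply_mul {R A : Type*} [CommSemiring R] [CommSemiring A]
    [Algebra R A] (D : Derivation R A A) (n : ℕ) (a b : A) :
    (⇑D)^[n] (a * b) = ∑ k ∈ range (n + 1), n.choose k • ((⇑D)^[k] a * (⇑D)^[n - k] b) := by
  rw [← Nat.sum_antidiagonal_eq_sum_range_succ
    (fun i j ↦ n.choose i • ((⇑D)^[i] a * (⇑D)^[j] b))]
  induction n with
  | zero => simp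
  | succ n ih =>
    rw [sum_antidiagonal_choose_succ_nsmul (fun i j => (⇑D)^[i] a * (⇑D)^[j] b) n]
    simp only [Function.iterate_succ_apply', ih, map_sum, map_nsmul, Derivation.leibniz,
      smul_eq_mul, smul_add, sum_add_distrib]
    congr 1
    refine sum_congr rfl fun ⟨i, j⟩ hij ↦ ?_
    rw [n.choose_symm_of_eq_add (mem_antidiagonal.1 hij).symm, mul_comm]

theorem Finset.sum_range_eq_sum_range_of_parity {M : Type*} [AddCommMonoid M] (f : ℕ → M)
    (n e : ℕ) (he : e < 2) (hf : ∀ k < 2 * n + e + 1, k % 2 ≠ e → f k = 0) :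
    ∑ k ∈ range (2 * n + e + 1), f k = ∑ k ∈ range (n + 1), f (2 * k + e) := by
  have hfilter :
      {k ∈ range (2 * n + e + 1) | k % 2 = e} = (range (n + 1)).image (2 * · + e) := by
    ext k
    simp only [mem_filter, mem_range, mem_image]
    exact ⟨fun ⟨_, _⟩ ↦ ⟨k / 2, by omega, by omega⟩, by rintro ⟨j, _, rfl⟩; omega⟩
  rw [← sum_filter_of_ne fun k hk h ↦ by_contra fun hke ↦ h (hf k (mem_range.1 hk) hke),
    hfilter, sum_image fun _ _ _ _ h ↦ by simpa using h]

theorem Polynomial.coeff_mul_of_parity {R : Type*} [Semiring R] (P Q : Polynomial R) (e i : ℕ)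
    (he : e < 2) (hP : ∀ a, a % 2 ≠ e → P.coeff a = 0) (hQ : ∀ b, Even b → Q.coeff b = 0) :
    (P * Q).coeff (2 * i + e + 1) =
      ∑ j ∈ range (i + 1), P.coeff (2 * j + e) * Q.coeff (2 * (i - j) + 1) := by
  rw [coeff_mul, Nat.sum_antidiagonal_eq_sum_range_succ_mk, sum_range_succ,
    hQ _ (by simp), mul_zero, add_zero, sum_range_eq_sum_range_of_parity _ i e he
      fun a _ ha ↦ by rw [hP a ha, zero_mul]]
  refine sum_congr rfl fun j hj ↦ ?_
  rw [show 2 * i + e + 1 - (2 * j + e) = 2 * (i - j) + 1 by grind]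

namespace MvPolynomial

variable {σ R : Type*} [CommSemiring R]

theorem exists_of_mem_support_mkDerivation (f : σ → MvPolynomial σ R) {p : MvPolynomial σ R}
    {d : σ →₀ ℕ} (hd : d ∈ (mkDerivation R f p).support) :
    ∃ d' ∈ p.support, ∃ i, d' i ≠ 0 ∧
      ∃ e ∈ (f i).support, d = d' - Finsupp.single i 1 + e := by
  classical
  rw [p.as_sum, map_sum] at hd
  obtain ⟨d', hd', hd⟩ := mem_biUnion.1 (support_sum hd)
  rw [mkDerivation_monomial] at hd
  obtain ⟨i, hi, hd⟩ := mem_biUnion.1 (support_sum (support_smul hd))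
  obtain ⟨a, ha, e, he, rfl⟩ := mem_add.1 (support_mul _ _ hd)
  rw [mem_singleton.1 (support_monomial_subset ha)]
  exact ⟨d', hd', i, Finsupp.mem_support_iff.1 hi, e, he, rfl⟩

theorem forall_mem_support_iterate_mkDerivation (f : σ → MvPolynomial σ R)
    (P : ℕ → (σ →₀ ℕ) → Prop) {p : MvPolynomial σ R} (h0 : ∀ d ∈ p.support, P 0 d)
    (hstep : ∀ n d i, P n d → d i ≠ 0 → ∀ e ∈ (f i).support,
      P (n + 1) (d - Finsupp.single i 1 + e)) (n : ℕ) :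
    ∀ d ∈ ((⇑(mkDerivation R f))^[n] p).support, P n d := by
  induction n with
  | zero => exact h0
  | succ n ih =>
    intro d hd
    rw [Function.iterate_succ_apply'] at hd
    obtain ⟨d', hd', i, hi, e, he, rfl⟩ := exists_of_mem_support_mkDerivation f hd
    exact hstep n d' i (ih d' hd') hi e he

theorem support_X_mul_X [Nontrivial R] (a b : σ) :
    (X a * X b : MvPolynomial σ R).support = {Finsupp.single a 1 + Finsupp.single b 1} := by
  classical
  rw [X, X, monomial_mul, one_mul, support_monomial, if_neg one_ne_zero]

end MvPolynomial

theorem mem_support_Dg_iterate_X0 {n : ℕ} {d : Fin 4 →₀ ℕ}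
    (hd : d ∈ ((fun p => Dg p)^[n] (X 0)).support) :
    d 0 = 1 ∧ d 1 % 2 = n % 2 ∧ d 1 + d 2 + d 3 = n := by
  refine forall_mem_support_iterate_mkDerivation _
    (fun n d => d 0 = 1 ∧ d 1 % 2 = n % 2 ∧ d 1 + d 2 + d 3 = n) ?_ ?_ n d hd
  · simp [support_X]
  · rintro n d i ⟨h0, h1, h3⟩ hi e he
    fin_cases i <;>
      simp only [Fin.isValue, Fin.reduceFinMk, Matrix.cons_val, support_X_mul_X,
        mem_singleton] at he <;>
      subst he <;> simp at hi ⊢ <;> omega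

theorem mem_support_Dg_iterate_X1 {n : ℕ} {d : Fin 4 →₀ ℕ}
    (hd : d ∈ ((fun p => Dg p)^[n] (X 1)).support) :
    d 0 = 0 ∧ d 1 % 2 = (n + 1) % 2 ∧ d 2 % 2 = n % 2 ∧ d 1 + d 2 + d 3 = n + 1 := by
  refine forall_mem_support_iterate_mkDerivation _
    (fun n d => d 0 = 0 ∧ d 1 % 2 = (n + 1) % 2 ∧ d 2 % 2 = n % 2 ∧ d 1 + d 2 + d 3 = n + 1)
    ?_ ?_ n d hd
  · simp [support_X]
  · rintro n d i ⟨h0, h1, h2, h3⟩ hi e he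
    fin_cases i <;>
      simp only [Fin.isValue, Fin.reduceFinMk, Matrix.cons_val, support_X_mul_X,
        mem_singleton] at he <;>
      subst he <;> simp at hi ⊢ <;> omega

noncomputable def evalAtYZero : MvPolynomial (Fin 4) ℚ →ₐ[ℚ] Polynomial ℚ :=
  aeval ![1, Polynomial.X, 0, 1]

theorem coeff_evalAtYZero (p : MvPolynomial (Fin 4) ℚ) (m : ℕ) :
    (evalAtYZero p).coeff m = ∑ d ∈ p.support with d 1 = m ∧ d 2 = 0, coeff d p := by
  conv_lhs => rw [p.as_sum]
  rw [map_sum, Polynomial.finsetSum_coeff, sum_filter]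
  refine sum_congr rfl fun d _ ↦ ?_
  rw [evalAtYZero, aeval_monomial, Finsupp.prod_fintype _ _ (by simp), Fin.prod_univ_four]
  rcases eq_or_ne (d 2) 0 with h2 | h2
  · simp [h2, eq_comm]
  · simp [h2]

theorem coeff_evalAtYZero_eq_coeff {p : MvPolynomial (Fin 4) ℚ} {m : ℕ} {μ : Fin 4 →₀ ℕ}
    (hμ : μ 1 = m ∧ μ 2 = 0) (h : ∀ d ∈ p.support, d 1 = m → d 2 = 0 → d = μ) :
    (evalAtYZero p).coeff m = coeff μ p := by
  rw [coeff_evalAtYZero, sum_eq_single μ]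
  · intro d hd hne
    rw [mem_filter] at hd
    exact absurd (h d hd.1 hd.2.1 hd.2.2) hne
  · intro hμp
    by_contra hne
    exact hμp (mem_filter.2 ⟨mem_support_iff.2 hne, hμ⟩)

theorem coeff_evalAtYZero_eq_zero {p : MvPolynomial (Fin 4) ℚ} {m : ℕ}
    (h : ∀ d ∈ p.support, d 1 = m → d 2 ≠ 0) : (evalAtYZero p).coeff m = 0 := by
  rw [coeff_evalAtYZero]
  exact sum_eq_zero fun d hd ↦ by
    rw [mem_filter] at hd
    exact absurd hd.2.2 (h d hd.1 hd.2.1)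

theorem tC_eq_coeff_evalAtYZero (N j : ℕ) :
    tC N j 0 = (evalAtYZero ((fun p => Dg p)^[N] (X 0))).coeff (2 * j + N % 2) := by
  rw [tC, if_pos ⟨j.cast_nonneg, le_rfl⟩]
  obtain ⟨k, rfl | rfl⟩ := Nat.even_or_odd' N <;>
  · refine (coeff_evalAtYZero_eq_coeff ?_ fun d hd h1 h2 ↦ ?_).symm
    · simp
      omega
    · obtain ⟨h0, -, h3⟩ := mem_support_Dg_iterate_X0 hd
      ext i
      fin_cases i <;> simp <;> omega

theorem sC_eq_coeff_evalAtYZero {N : ℕ} (hN : Even N) (i : ℕ) :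
    sC N i 0 = (evalAtYZero ((fun p => Dg p)^[N] (X 1))).coeff (2 * i + 1) := by
  rw [sC, if_pos ⟨i.cast_nonneg, le_rfl⟩]
  refine (coeff_evalAtYZero_eq_coeff ?_ fun d hd h1 h2 ↦ ?_).symm
  · simp [hN]
    omega
  · obtain ⟨h0, -, -, h3⟩ := mem_support_Dg_iterate_X1 hd
    ext i
    fin_cases i <;> simp [hN] <;> omega

theorem coeff_evalAtYZero_iterate_X0_of_mod_ne {N a : ℕ} (ha : a % 2 ≠ N % 2) :
    (evalAtYZero ((fun p => Dg p)^[N] (X 0))).coeff a = 0 :=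
  coeff_evalAtYZero_eq_zero fun _ hd h1 _ ↦ absurd (h1 ▸ (mem_support_Dg_iterate_X0 hd).2.1) ha

theorem coeff_evalAtYZero_iterate_X1_of_even {N b : ℕ} (hN : Even N) (hb : Even b) :
    (evalAtYZero ((fun p => Dg p)^[N] (X 1))).coeff b = 0 :=
  coeff_evalAtYZero_eq_zero fun d hd h1 h2 ↦ by
    obtain ⟨-, hd1, -, -⟩ := mem_support_Dg_iterate_X1 hd
    rw [Nat.even_iff] at hN hb
    omega

theorem evalAtYZero_iterate_X1_of_odd {N : ℕ} (hN : Odd N) :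
    evalAtYZero ((fun p => Dg p)^[N] (X 1)) = 0 :=
  Polynomial.ext fun b ↦ coeff_evalAtYZero_eq_zero fun d hd _ h2 ↦ by
    obtain ⟨-, -, hd2, -⟩ := mem_support_Dg_iterate_X1 hd
    rw [Nat.odd_iff] at hN
    omega

theorem evalAtYZero_iterate_succ_X0 (N : ℕ) :
    evalAtYZero ((fun p => Dg p)^[N + 1] (X 0)) =
      ∑ k ∈ range (N + 1), N.choose k • (evalAtYZero ((fun p => Dg p)^[k] (X 0)) *
        evalAtYZero ((fun p => Dg p)^[N - k] (X 1))) := by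
  have hX0 : Dg (X 0) = X 0 * X 1 := mkDerivation_X _ _ _
  rw [Function.iterate_succ_apply, hX0]
  exact (congrArg evalAtYZero (Dg.iterate_apply_mul N _ _)).trans (by simp [map_sum])

theorem coeff_evalAtYZero_iterate_X0 (n e i : ℕ) (he : e < 2) :
    (evalAtYZero ((fun p => Dg p)^[2 * n + e + 1] (X 0))).coeff (2 * i + e + 1) =
      ∑ k ∈ range (n + 1), ((2 * n + e).choose (2 * k + e) : ℚ) *
        ∑ j ∈ range (i + 1), (evalAtYZero ((fun p => Dg p)^[2 * k + e] (X 0))).coeff (2 * j + e) *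
          (evalAtYZero ((fun p => Dg p)^[2 * n - 2 * k] (X 1))).coeff (2 * (i - j) + 1) := by
  rw [evalAtYZero_iterate_succ_X0, Polynomial.finsetSum_coeff,
    sum_range_eq_sum_range_of_parity _ n e he fun k hk hke ↦ by
      rw [evalAtYZero_iterate_X1_of_odd (by rw [Nat.odd_iff]; omega), mul_zero,
        smul_zero, Polynomial.coeff_zero]]
  refine sum_congr rfl fun k hk ↦ ?_
  rw [show 2 * n + e - (2 * k + e) = 2 * n - 2 * k by omega, Polynomial.coeff_smul, nsmul_eq_mul,
    Polynomial.coeff_mul_of_parity _ _ e i he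
      (fun a ha ↦ coeff_evalAtYZero_iterate_X0_of_mod_ne (by omega))
      (fun b hb ↦ coeff_evalAtYZero_iterate_X1_of_even (by rw [Nat.even_iff]; omega) hb)]

theorem tC_succ_eq_sum (n e i : ℕ) (he : e < 2) :
    tC (2 * n + e + 1) ((i + e : ℕ) : ℤ) 0 =
      ∑ k ∈ range (n + 1), ((2 * n + e).choose (2 * k + e) : ℚ) *
        ∑ j ∈ range (i + 1), tC (2 * k + e) j 0 * sC (2 * n - 2 * k) ((i : ℤ) - j) 0 := by
  rw [tC_eq_coeff_evalAtYZero, show 2 * (i + e) + (2 * n + e + 1) % 2 = 2 * i + e + 1 by omega,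
    coeff_evalAtYZero_iterate_X0 n e i he]
  refine sum_congr rfl fun k _ ↦ congrArg _ <| sum_congr rfl fun j hj ↦ ?_
  rw [show (i : ℤ) - j = ((i - j : ℕ) : ℤ) by grind, tC_eq_coeff_evalAtYZero,
    sC_eq_coeff_evalAtYZero (by rw [Nat.even_iff]; omega), show (2 * k + e) % 2 = e by omega]

theorem stmt17 (n : ℕ) (i : ℕ) :
    tC (2*n+1) (i:ℤ) 0 =
      ∑ k ∈ Finset.range (n+1), ((2*n).choose (2*k) : ℚ) *
        ∑ j ∈ Finset.range (i+1), tC (2*k) (j:ℤ) 0 * sC (2*n-2*k) ((i:ℤ)-(j:ℤ)) 0 ∧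
    tC (2*n+2) ((i:ℤ)+1) 0 =
      ∑ k ∈ Finset.range (n+1), ((2*n+1).choose (2*k+1) : ℚ) *
        ∑ j ∈ Finset.range (i+1), tC (2*k+1) (j:ℤ) 0 * sC (2*n-2*k) ((i:ℤ)-(j:ℤ)) 0 :=
  ⟨tC_succ_eq_sum n 0 i (by norm_num), by exact_mod_cast tC_succ_eq_sum n 1 i (by norm_num)⟩
end
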